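/- Let p ≥ 1 be a real number. Let k̃ : ℝ × [0,∞) → ℝ be a smooth function, 2π-periodic in its first (angular) variable θ, with k̃(θ,τ) > 0 everywhere, satisfying the rescaled curve-shortening equation ∂k̃/∂τ = p·k̃^{1+1/p}·∂²k̃/∂θ² + p·k̃^{2+1/p} − p·k̃ on ℝ × (0,∞). Then for every τ ∈ (0,∞): (d/dτ) ∫₀^{2π} (∂k̃/∂θ)² dθ = 2p·( −∫₀^{2π} (∂k̃/∂θ)² dθ − ∫₀^{2π} (∂²k̃/∂θ²)²·k̃^{(p+1)/p} dθ + ((2p+1)/p)·∫₀^{2π} (∂k̃/∂θ)²·k̃^{(p+1)/p} dθ ). -/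

import Mathlib

open Real Filter Set
open scoped ContDiff

lemma periodic_deriv' (f : ℝ → ℝ) {c : ℝ} (hf : Function.Periodic f c) :
    Function.Periodic (deriv f) c := by
  intro x
  have h : (fun y => f (y + c)) = f := funext hf
  rw [← deriv_comp_add_const, h]

lemma slice1 {F : ℝ × ℝ → ℝ} {s : Set (ℝ × ℝ)} (hs : IsOpen s)
    (hF : ContDiffOn ℝ ∞ F s) {θ τ : ℝ} (hq : (θ, τ) ∈ s) :
    HasDerivAt (fun x => F (x, τ)) (fderiv ℝ F (θ, τ) ((1:ℝ), (0:ℝ))) θ := by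
  have hd : HasFDerivAt F (fderiv ℝ F (θ, τ)) (θ, τ) :=
    ((hF.contDiffAt (hs.mem_nhds hq)).differentiableAt (by simp)).hasFDerivAt
  have hl : HasDerivAt (fun x : ℝ => (x, τ)) ((1:ℝ), (0:ℝ)) θ :=
    (hasDerivAt_id θ).prodMk (hasDerivAt_const θ τ)
  exact hd.comp_hasDerivAt θ hl

lemma slice2 {F : ℝ × ℝ → ℝ} {s : Set (ℝ × ℝ)} (hs : IsOpen s)
    (hF : ContDiffOn ℝ ∞ F s) {θ τ : ℝ} (hq : (θ, τ) ∈ s) :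
    HasDerivAt (fun x => F (θ, x)) (fderiv ℝ F (θ, τ) ((0:ℝ), (1:ℝ))) τ := by
  have hd : HasFDerivAt F (fderiv ℝ F (θ, τ)) (θ, τ) :=
    ((hF.contDiffAt (hs.mem_nhds hq)).differentiableAt (by simp)).hasFDerivAt
  have hl : HasDerivAt (fun x : ℝ => (θ, x)) ((0:ℝ), (1:ℝ)) τ :=
    (hasDerivAt_const τ θ).prodMk (hasDerivAt_id τ)
  exact hd.comp_hasDerivAt τ hl

lemma fderiv_apply_smooth {F : ℝ × ℝ → ℝ} {s : Set (ℝ × ℝ)} (hs : IsOpen s)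
    (hF : ContDiffOn ℝ ∞ F s) (v : ℝ × ℝ) :
    ContDiffOn ℝ ∞ (fun q => fderiv ℝ F q v) s :=
  (hF.fderiv_of_isOpen hs (by exact_mod_cast le_top)).clm_apply contDiffOn_const

lemma clairaut {F : ℝ × ℝ → ℝ} {s : Set (ℝ × ℝ)} (hs : IsOpen s)
    (hF : ContDiffOn ℝ ∞ F s) {a : ℝ × ℝ} (hq : a ∈ s) (v w : ℝ × ℝ) :
    fderiv ℝ (fun q => fderiv ℝ F q v) a w = fderiv ℝ (fun q => fderiv ℝ F q w) a v := by
  have hF' : ContDiffOn ℝ ∞ (fderiv ℝ F) s := hF.fderiv_of_isOpen hs (by exact_mod_cast le_top)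
  have hd2 : HasFDerivAt (fderiv ℝ F) (fderiv ℝ (fderiv ℝ F) a) a :=
    ((hF'.contDiffAt (hs.mem_nhds hq)).differentiableAt (by simp)).hasFDerivAt
  have hev : ∀ᶠ y in nhds a, HasFDerivAt F (fderiv ℝ F y) y := by
    filter_upwards [hs.mem_nhds hq] with y hy
    exact ((hF.contDiffAt (hs.mem_nhds hy)).differentiableAt
      (by simp)).hasFDerivAt
  have hsym := second_derivative_symmetric_of_eventually hev hd2 v w
  have e1 : ∀ u : ℝ × ℝ, fderiv ℝ (fun q => fderiv ℝ F q u) a =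
      (ContinuousLinearMap.apply ℝ ℝ u).comp (fderiv ℝ (fderiv ℝ F) a) := by
    intro u
    exact ((ContinuousLinearMap.apply ℝ ℝ u).hasFDerivAt.comp a hd2).fderiv
  rw [e1 v, e1 w]
  simpa using hsym.symm


/-- The exact evolution identity (3.9) for the `L²` norm of the first
angular derivative of the normalized curvature. -/
theorem evolution_identity_first_derivative
    (p : ℝ) (hp : 1 ≤ p) (K : ℝ → ℝ → ℝ)
    (hsmooth : ContDiffOn ℝ (⊤ : ℕ∞) (fun q : ℝ × ℝ => K q.1 q.2) (univ ×ˢ Ici 0))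
    (hper : ∀ τ : ℝ, Function.Periodic (fun θ => K θ τ) (2 * π))
    (hpos : ∀ θ τ : ℝ, 0 ≤ τ → 0 < K θ τ)
    (hpde : ∀ θ : ℝ, ∀ τ ∈ Ioi (0:ℝ),
      deriv (fun s => K θ s) τ =
        p * K θ τ ^ (1 + 1 / p) * deriv (deriv (fun x => K x τ)) θ
          + p * K θ τ ^ (2 + 1 / p) - p * K θ τ) :
    ∀ τ ∈ Ioi (0:ℝ),
      deriv (fun s => ∫ θ in (0:ℝ)..(2 * π), (deriv (fun x => K x s) θ) ^ 2) τ =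
        2 * p * (-(∫ θ in (0:ℝ)..(2 * π), (deriv (fun x => K x τ) θ) ^ 2)
          - (∫ θ in (0:ℝ)..(2 * π),
              (deriv (deriv (fun x => K x τ)) θ) ^ 2 * K θ τ ^ ((p + 1) / p))
          + ((2 * p + 1) / p) *
            ∫ θ in (0:ℝ)..(2 * π),
              (deriv (fun x => K x τ) θ) ^ 2 * K θ τ ^ ((p + 1) / p)) := by
  intro τ hτmem
  have hτ : (0:ℝ) < τ := hτmem
  have hp0 : (0:ℝ) < p := lt_of_lt_of_le one_pos hp
  have hπ : (0:ℝ) < 2 * π := by positivity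
  set U : Set (ℝ × ℝ) := univ ×ˢ Ioi (0:ℝ) with hUdef
  have hU : IsOpen U := isOpen_univ.prod isOpen_Ioi
  have hmem : ∀ {θ s : ℝ}, 0 < s → (θ, s) ∈ U := fun {θ s} hs => ⟨mem_univ _, hs⟩
  set f : ℝ × ℝ → ℝ := fun q => K q.1 q.2 with hfdef
  have hfU : ContDiffOn ℝ ∞ f U :=
    (hsmooth.of_le (by simp)).mono (Set.prod_mono_right Ioi_subset_Ici_self)
  set g1 : ℝ × ℝ → ℝ := fun q => fderiv ℝ f q ((1:ℝ), (0:ℝ)) with hg1def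
  set g2 : ℝ × ℝ → ℝ := fun q => fderiv ℝ f q ((0:ℝ), (1:ℝ)) with hg2def
  have hg1 : ContDiffOn ℝ ∞ g1 U := fderiv_apply_smooth hU hfU _
  have hg2 : ContDiffOn ℝ ∞ g2 U := fderiv_apply_smooth hU hfU _
  set g11 : ℝ × ℝ → ℝ := fun q => fderiv ℝ g1 q ((1:ℝ), (0:ℝ)) with hg11def
  set g21 : ℝ × ℝ → ℝ := fun q => fderiv ℝ g2 q ((1:ℝ), (0:ℝ)) with hg21def
  have hg11 : ContDiffOn ℝ ∞ g11 U := fderiv_apply_smooth hU hg1 _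
  have hg21 : ContDiffOn ℝ ∞ g21 U := fderiv_apply_smooth hU hg2 _
  -- derivative facts
  have hDk : ∀ (θ : ℝ) {s : ℝ}, 0 < s → HasDerivAt (fun x => K x s) (g1 (θ, s)) θ :=
    fun θ s hs => slice1 hU hfU (hmem hs)
  have hk1 : ∀ (θ : ℝ) {s : ℝ}, 0 < s → deriv (fun x => K x s) θ = g1 (θ, s) :=
    fun θ s hs => (hDk θ hs).deriv
  have hfun1 : ∀ {s : ℝ}, 0 < s → deriv (fun x => K x s) = fun x => g1 (x, s) :=
    fun {s} hs => funext fun θ => hk1 θ hs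
  have hDk1 : ∀ (θ : ℝ) {s : ℝ}, 0 < s → HasDerivAt (fun x => g1 (x, s)) (g11 (θ, s)) θ :=
    fun θ s hs => slice1 hU hg1 (hmem hs)
  have hk2 : ∀ (θ : ℝ) {s : ℝ}, 0 < s → deriv (deriv (fun x => K x s)) θ = g11 (θ, s) := by
    intro θ s hs
    rw [hfun1 hs]
    exact (hDk1 θ hs).deriv
  have hDkτ : ∀ (θ : ℝ) {s : ℝ}, 0 < s → HasDerivAt (fun x => K θ x) (g2 (θ, s)) s :=
    fun θ s hs => slice2 hU hfU (hmem hs)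
  have hkτ : ∀ (θ : ℝ) {s : ℝ}, 0 < s → deriv (fun x => K θ x) s = g2 (θ, s) :=
    fun θ s hs => (hDkτ θ hs).deriv
  have hDv : ∀ (θ : ℝ) {s : ℝ}, 0 < s → HasDerivAt (fun x => g2 (x, s)) (g21 (θ, s)) θ :=
    fun θ s hs => slice1 hU hg2 (hmem hs)
  have hclair : ∀ {q : ℝ × ℝ}, q ∈ U → fderiv ℝ g1 q ((0:ℝ), (1:ℝ)) = g21 q :=
    fun {q} hq => clairaut hU hfU hq _ _
  -- continuity of slices
  have hcs : ∀ (Φ : ℝ × ℝ → ℝ), ContinuousOn Φ U → ∀ {s : ℝ}, 0 < s →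
      Continuous (fun x => Φ (x, s)) := by
    intro Φ hΦ s hs
    rw [← continuousOn_univ]
    exact hΦ.comp ((continuous_id.prodMk continuous_const).continuousOn)
      (fun x _ => hmem hs)
  have ck : Continuous (fun θ => K θ τ) := hcs f hfU.continuousOn hτ
  have ck1 : Continuous (fun θ => g1 (θ, τ)) := hcs g1 hg1.continuousOn hτ
  have ck2 : Continuous (fun θ => g11 (θ, τ)) := hcs g11 hg11.continuousOn hτ
  have cv : Continuous (fun θ => g2 (θ, τ)) := hcs g2 hg2.continuousOn hτ
  have cvd : Continuous (fun θ => g21 (θ, τ)) := hcs g21 hg21.continuousOn hτ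
  have crp : ∀ c : ℝ, Continuous (fun θ => K θ τ ^ c) := fun c =>
    ck.rpow_const (fun θ => Or.inl (hpos θ τ hτ.le).ne')
  -- periodicity
  have hkper : Function.Periodic (fun θ => K θ τ) (2 * π) := hper τ
  have hk1per : Function.Periodic (fun θ => g1 (θ, τ)) (2 * π) := by
    have := periodic_deriv' _ (hper τ)
    rwa [hfun1 hτ] at this
  have hvper : Function.Periodic (fun θ => g2 (θ, τ)) (2 * π) := by
    intro θ
    have h1 : (fun x => K (θ + 2 * π) x) = fun x => K θ x := funext fun s => hper s θ
    simp only
    rw [← hkτ (θ + 2 * π) hτ, ← hkτ θ hτ, h1]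
  -- PDE substitution
  have hv_eq : ∀ θ : ℝ, g2 (θ, τ) =
      p * K θ τ ^ (1 + 1 / p) * g11 (θ, τ) + p * K θ τ ^ (2 + 1 / p) - p * K θ τ := by
    intro θ
    have h0 := hpde θ τ hτmem
    rw [hkτ θ hτ] at h0
    rw [h0, hk2 θ hτ]
  -- differentiation under the integral sign
  set ε : ℝ := τ / 2 with hεdef
  have hε : 0 < ε := by positivity
  have hball : ∀ x ∈ Metric.ball τ ε, 0 < x := by
    intro x hx
    rw [Metric.mem_ball, Real.dist_eq] at hx
    have := abs_lt.mp hx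
    linarith
  have hCsub : (Icc (0:ℝ) (2 * π) ×ˢ Icc (τ - ε) (τ + ε) : Set (ℝ × ℝ)) ⊆ U := by
    rintro ⟨t, x⟩ ⟨-, hx⟩
    exact hmem (by simp only [mem_Icc] at hx; linarith)
  have hΦc : ContinuousOn (fun q : ℝ × ℝ => 2 * (g1 q * g21 q)) U :=
    continuousOn_const.mul (hg1.continuousOn.mul hg21.continuousOn)
  obtain ⟨M, hM⟩ := (isCompact_Icc.prod isCompact_Icc).exists_bound_of_continuousOn
    (hΦc.mono hCsub)
  have hIsub : uIoc (0:ℝ) (2 * π) ⊆ Icc (0:ℝ) (2 * π) := by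
    rw [uIoc_of_le hπ.le]
    exact Ioc_subset_Icc_self
  obtain ⟨-, hasDeriv⟩ :=
    intervalIntegral.hasDerivAt_integral_of_dominated_loc_of_deriv_le
      (μ := MeasureTheory.volume) (a := (0:ℝ)) (b := 2 * π)
      (F := fun x t => (g1 (t, x)) ^ 2)
      (F' := fun x t => 2 * (g1 (t, x) * g21 (t, x)))
      (x₀ := τ) (bound := fun _ => M) (Metric.ball_mem_nhds τ hε)
      (by
        filter_upwards [Metric.ball_mem_nhds τ hε] with x hx
        exact ((hcs g1 hg1.continuousOn (hball x hx)).pow 2).aestronglyMeasurable)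
      ((ck1.pow 2).intervalIntegrable 0 (2 * π))
      ((continuous_const.mul (ck1.mul cvd)).aestronglyMeasurable)
      (MeasureTheory.ae_of_all _ (by
        intro t ht x hx
        exact hM (t, x) ⟨hIsub ht, by
          rw [Metric.mem_ball, Real.dist_eq] at hx
          have := abs_lt.mp hx
          exact mem_Icc.mpr ⟨by linarith, by linarith⟩⟩))
      (intervalIntegrable_const)
      (MeasureTheory.ae_of_all _ (by
        intro t ht x hx
        have hx0 : 0 < x := hball x hx
        have h1 : HasDerivAt (fun s => g1 (t, s)) (fderiv ℝ g1 (t, x) ((0:ℝ), (1:ℝ))) x :=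
          slice2 hU hg1 (hmem hx0)
        have h2 := h1.fun_pow 2
        rw [hclair (hmem hx0)] at h2
        refine h2.congr_deriv ?_
        push_cast
        ring))
  -- transfer to the original function
  have heq : (fun s => ∫ θ in (0:ℝ)..(2 * π), (deriv (fun x => K x s) θ) ^ 2)
      =ᶠ[nhds τ] (fun x => ∫ t in (0:ℝ)..(2 * π), (g1 (t, x)) ^ 2) := by
    filter_upwards [Ioi_mem_nhds hτ] with s hs
    apply intervalIntegral.integral_congr
    intro θ _
    simp only [hk1 θ hs]
  have hDorig : HasDerivAt
      (fun s => ∫ θ in (0:ℝ)..(2 * π), (deriv (fun x => K x s) θ) ^ 2)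
      (∫ t in (0:ℝ)..(2 * π), 2 * (g1 (t, τ) * g21 (t, τ))) τ :=
    hasDeriv.congr_of_eventuallyEq heq
  rw [hDorig.deriv]
  -- rewrite the RHS integrands
  simp only [show ∀ θ : ℝ, deriv (fun x => K x τ) θ = g1 (θ, τ) from fun θ => hk1 θ hτ,
    show ∀ θ : ℝ, deriv (deriv (fun x => K x τ)) θ = g11 (θ, τ) from fun θ => hk2 θ hτ,
    show (p + 1) / p = 1 + 1 / p from by field_simp]
  -- integration by parts, step A
  have hintA1 : IntervalIntegrable (fun θ => 2 * (g11 (θ, τ) * g2 (θ, τ)))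
      MeasureTheory.volume 0 (2 * π) :=
    (continuous_const.fun_mul (ck2.mul cv)).intervalIntegrable 0 (2 * π)
  have hintA2 : IntervalIntegrable (fun θ => 2 * (g1 (θ, τ) * g21 (θ, τ)))
      MeasureTheory.volume 0 (2 * π) :=
    (continuous_const.fun_mul (ck1.mul cvd)).intervalIntegrable 0 (2 * π)
  have hA0 : (∫ θ in (0:ℝ)..(2 * π),
      (2 * (g11 (θ, τ) * g2 (θ, τ)) + 2 * (g1 (θ, τ) * g21 (θ, τ)))) = 0 := by
    rw [intervalIntegral.integral_eq_sub_of_hasDerivAt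
      (f := fun θ => 2 * (g1 (θ, τ) * g2 (θ, τ)))
      (fun θ _ => by
        have := ((hDk1 θ hτ).fun_mul (hDv θ hτ)).const_mul (2:ℝ)
        refine this.congr_deriv ?_
        ring)
      (hintA1.add hintA2)]
    have e1 : g1 (2 * π, τ) = g1 (0, τ) := by simpa using hk1per 0
    have e2 : g2 (2 * π, τ) = g2 (0, τ) := by simpa using hvper 0
    rw [e1, e2]
    ring
  have hA : (∫ θ in (0:ℝ)..(2 * π), 2 * (g1 (θ, τ) * g21 (θ, τ)))
      = -(∫ θ in (0:ℝ)..(2 * π), 2 * (g11 (θ, τ) * g2 (θ, τ))) := by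
    rw [intervalIntegral.integral_add hintA1 hintA2] at hA0
    linarith
  rw [hA]
  -- substitute the PDE into the remaining integral
  have hsub : (∫ θ in (0:ℝ)..(2 * π), 2 * (g11 (θ, τ) * g2 (θ, τ)))
      = (2 * p) * (∫ θ in (0:ℝ)..(2 * π), g11 (θ, τ) ^ 2 * K θ τ ^ (1 + 1 / p))
        + (2 * p) * (∫ θ in (0:ℝ)..(2 * π), K θ τ ^ (2 + 1 / p) * g11 (θ, τ))
        - (2 * p) * (∫ θ in (0:ℝ)..(2 * π), K θ τ * g11 (θ, τ)) := by
    rw [← intervalIntegral.integral_const_mul, ← intervalIntegral.integral_const_mul,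
      ← intervalIntegral.integral_const_mul,
      ← intervalIntegral.integral_add
        ((continuous_const.fun_mul ((ck2.fun_pow 2).fun_mul (crp _))).intervalIntegrable 0 (2 * π))
        ((continuous_const.fun_mul ((crp _).fun_mul ck2)).intervalIntegrable 0 (2 * π)),
      ← intervalIntegral.integral_sub
        (((continuous_const.fun_mul ((ck2.fun_pow 2).fun_mul (crp _))).fun_add
          (continuous_const.fun_mul ((crp _).fun_mul ck2))).intervalIntegrable 0 (2 * π))
        ((continuous_const.fun_mul (ck.fun_mul ck2)).intervalIntegrable 0 (2 * π))]
    apply intervalIntegral.integral_congr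
    intro θ _
    simp only
    rw [hv_eq θ]
    ring
  rw [hsub]
  -- IBP for ∫ K * g11 = -∫ g1²
  have hC : (∫ θ in (0:ℝ)..(2 * π), K θ τ * g11 (θ, τ))
      = -(∫ θ in (0:ℝ)..(2 * π), g1 (θ, τ) ^ 2) := by
    have h0 : (∫ θ in (0:ℝ)..(2 * π), (g1 (θ, τ) ^ 2 + K θ τ * g11 (θ, τ))) = 0 := by
      rw [intervalIntegral.integral_eq_sub_of_hasDerivAt
        (f := fun θ => K θ τ * g1 (θ, τ))
        (fun θ _ => by
          have := (hDk θ hτ).fun_mul (hDk1 θ hτ)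
          refine this.congr_deriv ?_
          ring)
        (((ck1.fun_pow 2).fun_add (ck.fun_mul ck2)).intervalIntegrable 0 (2 * π))]
      have e1 : g1 (2 * π, τ) = g1 (0, τ) := by simpa using hk1per 0
      have e2 : K (2 * π) τ = K 0 τ := by simpa using hkper 0
      rw [e1, e2]
      ring
    rw [intervalIntegral.integral_add ((ck1.fun_pow 2).intervalIntegrable 0 (2 * π))
      ((ck.fun_mul ck2).intervalIntegrable 0 (2 * π))] at h0
    linarith
  -- IBP for ∫ K^(2+1/p) * g11 = -(2+1/p) ∫ g1² K^(1+1/p)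
  have hB : (∫ θ in (0:ℝ)..(2 * π), K θ τ ^ (2 + 1 / p) * g11 (θ, τ))
      = -((2 + 1 / p) * ∫ θ in (0:ℝ)..(2 * π), g1 (θ, τ) ^ 2 * K θ τ ^ (1 + 1 / p)) := by
    have h0 : (∫ θ in (0:ℝ)..(2 * π),
        ((2 + 1 / p) * (g1 (θ, τ) ^ 2 * K θ τ ^ (1 + 1 / p))
          + K θ τ ^ (2 + 1 / p) * g11 (θ, τ))) = 0 := by
      rw [intervalIntegral.integral_eq_sub_of_hasDerivAt
        (f := fun θ => K θ τ ^ (2 + 1 / p) * g1 (θ, τ))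
        (fun θ _ => by
          have hrp : HasDerivAt (fun x => K x τ ^ (2 + 1 / p))
              (g1 (θ, τ) * (2 + 1 / p) * K θ τ ^ ((2 + 1 / p) - 1)) θ :=
            (hDk θ hτ).rpow_const (Or.inl (hpos θ τ hτ.le).ne')
          rw [show (2 + 1 / p) - 1 = 1 + 1 / p from by ring] at hrp
          have := hrp.fun_mul (hDk1 θ hτ)
          refine this.congr_deriv ?_
          ring)
        (((continuous_const.fun_mul ((ck1.fun_pow 2).fun_mul (crp _))).fun_add
          ((crp _).fun_mul ck2)).intervalIntegrable 0 (2 * π))]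
      have e1 : g1 (2 * π, τ) = g1 (0, τ) := by simpa using hk1per 0
      have e2 : K (2 * π) τ = K 0 τ := by simpa using hkper 0
      rw [e1, e2]
      ring
    rw [intervalIntegral.integral_add
      ((continuous_const.fun_mul ((ck1.fun_pow 2).fun_mul (crp _))).intervalIntegrable 0 (2 * π))
      (((crp _).fun_mul ck2).intervalIntegrable 0 (2 * π)),
      intervalIntegral.integral_const_mul] at h0
    linarith
  rw [hB, hC]
  have hpne : p ≠ 0 := ne_of_gt (lt_of_lt_of_le one_pos hp)
  field_simp
  ring
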